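/- Let w ∈ W be a non-identity element. Then w is a standard OGS elementary element of Ṡ_n if and only if there exist m ≥ 1, indices 1 ≤ k_1 < k_2 < ⋯ < k_m ≤ n, and integers i_1, …, i_m with −k_1 ≤ i_1 < 0, with 0 < i_j < k_j for every 2 ≤ j ≤ m, and with Σ_{j=1}^m i_j = 0, such that w = τ_{k_1}^{i_1}·τ_{k_2}^{i_2}⋯τ_{k_m}^{i_m}. -/

import Mathlib

/-- The Coxeter matrix of type `Bₙ`, with the bond of order `4` between the
generators of indices `0` and `1` (the paper's convention): `s_i² = 1`,
`(s_0·s_1)⁴ = 1`, `(s_i·s_{i+1})³ = 1` for `1 ≤ i ≤ n-2`, and `(s_i·s_j)² = 1`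
for `|i-j| ≥ 2`. -/
def BCoxeterMatrix (n : ℕ) : CoxeterMatrix (Fin n) where
  M := Matrix.of fun i j : Fin n ↦
    if i = j then 1
      else if ((i : ℕ) = 0 ∧ (j : ℕ) = 1) ∨ ((j : ℕ) = 0 ∧ (i : ℕ) = 1) then 4
      else if (j : ℕ) + 1 = i ∨ (i : ℕ) + 1 = j then 3 else 2
  isSymm := by unfold Matrix.IsSymm; aesop
  diagonal := by simp
  off_diagonal := by aesop

variable {n : ℕ} {W : Type*} [Group W]

/-- The simple reflection `s_j` of the Coxeter system, for `0 ≤ j ≤ n-1`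
(junk value `1` for `j ≥ n`). -/
def sgen (cs : CoxeterSystem (BCoxeterMatrix n) W) (j : ℕ) : W :=
  if h : j < n then cs.simple ⟨j, h⟩ else 1

/-- `tau cs k` is the element `τ_k = s_0 · s_1 ⋯ s_{k-1}` (with `τ_0 = 1`). -/
def tau (cs : CoxeterSystem (BCoxeterMatrix n) W) (k : ℕ) : W :=
  ((List.range k).map (sgen cs)).prod

/-- The parabolic subgroup `Ṡ_n` of `W` generated by `s_1, …, s_{n-1}`. -/
def Sdot (cs : CoxeterSystem (BCoxeterMatrix n) W) : Subgroup W :=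
  Subgroup.closure (cs.simple '' {j : Fin n | (j : ℕ) ≠ 0})

/-- `tgen cs k` is the element `t_k = s_1 · s_2 ⋯ s_{k-1}`. -/
def tgen (cs : CoxeterSystem (BCoxeterMatrix n) W) (k : ℕ) : W :=
  ((List.range (k - 1)).map (fun j => sgen cs (j + 1))).prod

section Lemmas

variable (cs : CoxeterSystem (BCoxeterMatrix n) W)

lemma sgen_mul_self (j : ℕ) : sgen cs j * sgen cs j = 1 := by
  unfold sgen; split
  · exact cs.simple_mul_simple_self _
  · simp

lemma sgen_inv (j : ℕ) : (sgen cs j)⁻¹ = sgen cs j :=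
  inv_eq_of_mul_eq_one_right (sgen_mul_self cs j)

private lemma involutive_eq {s t : W} (hs : s * s = 1) (ht : t * t = 1)
    (h : (s * t) * (s * t) = 1) : s * t = t * s := by
  have h1 : s * t = (s * t)⁻¹ := eq_inv_of_mul_eq_one_left h
  rw [mul_inv_rev, inv_eq_of_mul_eq_one_right hs, inv_eq_of_mul_eq_one_right ht] at h1
  exact h1

lemma sgen_comm {i j : ℕ} (h : i + 2 ≤ j) : sgen cs i * sgen cs j = sgen cs j * sgen cs i := by
  unfold sgen
  split <;> split <;> try simp
  rename_i hi hj
  have hM : (BCoxeterMatrix n).M ⟨i, hi⟩ ⟨j, hj⟩ = 2 := by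
    show (if _ then _ else _) = 2
    rw [if_neg, if_neg, if_neg] <;> simp [Fin.ext_iff] <;> omega
  have := cs.simple_mul_simple_pow ⟨i, hi⟩ ⟨j, hj⟩
  rw [hM, pow_two] at this
  exact involutive_eq (cs.simple_mul_simple_self _) (cs.simple_mul_simple_self _) this

lemma sgen_braid {i : ℕ} (h1 : 1 ≤ i) (h2 : i + 1 < n) :
    sgen cs i * sgen cs (i + 1) * sgen cs i = sgen cs (i + 1) * sgen cs i * sgen cs (i + 1) := by
  have hi : i < n := by omega
  have hM : (BCoxeterMatrix n).M ⟨i, hi⟩ ⟨i + 1, h2⟩ = 3 := by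
    show (if _ then _ else _) = 3
    rw [if_neg, if_neg, if_pos] <;> simp [Fin.ext_iff] <;> omega
  have key := cs.simple_mul_simple_pow ⟨i, hi⟩ ⟨i + 1, h2⟩
  rw [hM] at key
  simp only [sgen, dif_pos hi, dif_pos h2]
  generalize hx : cs.simple ⟨i, hi⟩ = x at *
  generalize hy : cs.simple ⟨i + 1, h2⟩ = y at *
  have hxx : x * x = 1 := by rw [← hx]; exact cs.simple_mul_simple_self _
  have hyy : y * y = 1 := by rw [← hy]; exact cs.simple_mul_simple_self _
  have key' : (x * y * x) * (y * x * y) = 1 := by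
    rw [← key]; simp only [pow_succ, pow_zero, one_mul, mul_assoc]
  have h3 : x * y * x = (y * x * y)⁻¹ := eq_inv_of_mul_eq_one_left key'
  rw [h3, mul_inv_rev, mul_inv_rev, inv_eq_of_mul_eq_one_right hxx,
    inv_eq_of_mul_eq_one_right hyy, mul_assoc]

/-- `seg cs a b = σ_a σ_{a+1} ⋯ σ_{b-1}` (empty product if `b ≤ a`). -/
def seg (a b : ℕ) : W := ((List.range' a (b - a)).map (sgen cs)).prod

lemma seg_of_le {a b : ℕ} (h : b ≤ a) : seg cs a b = 1 := by
  have : b - a = 0 := by omega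
  simp [seg, this]

lemma seg_succ_right {a b : ℕ} (h : a ≤ b) : seg cs a (b + 1) = seg cs a b * sgen cs b := by
  have h1 : b + 1 - a = (b - a) + 1 := by omega
  have h2 : List.range' a (b - a + 1) = List.range' a (b - a) ++ [a + (b - a)] := by
    simpa using List.range'_concat (step := 1) (s := a) (n := b - a)
  have h3 : a + (b - a) = b := by omega
  rw [seg, h1, h2, h3, List.map_append, List.prod_append, List.map_singleton,
    List.prod_singleton, seg]

lemma seg_succ_left {a b : ℕ} (h : a < b) : seg cs a b = sgen cs a * seg cs (a + 1) b := by
  have h1 : b - a = (b - (a + 1)) + 1 := by omega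
  rw [seg, h1, List.range'_succ, List.map_cons, List.prod_cons, seg]

lemma seg_split {a b c : ℕ} (hab : a ≤ b) (hbc : b ≤ c) :
    seg cs a c = seg cs a b * seg cs b c := by
  have h1 : List.range' a (b - a) ++ List.range' (a + (b - a)) (c - b) = List.range' a (c - a) := by
    rw [List.range'_append_1, show b - a + (c - b) = c - a by omega]
  rw [seg, seg, seg, ← List.prod_append, ← List.map_append]
  rw [show a + (b - a) = b by omega] at h1
  rw [h1]

lemma sgen_comm_seg_left {j a b : ℕ} (h : j + 2 ≤ a) :
    sgen cs j * seg cs a b = seg cs a b * sgen cs j := by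
  induction b with
  | zero => rw [seg_of_le cs (by omega)]; simp
  | succ c ih =>
    rcases le_or_gt a c with hac | hac
    · rw [seg_succ_right cs hac, ← mul_assoc, ih, mul_assoc,
        sgen_comm cs (show j + 2 ≤ c by omega), mul_assoc]
    · rcases Nat.lt_or_ge (c + 1) (a + 1) with hc | hc
      · rw [seg_of_le cs (by omega)]; simp
      · have : a = c + 1 := by omega
        subst this
        rw [seg_of_le cs (le_refl _)]; simp

lemma sgen_comm_seg_right {j a b : ℕ} (h : b + 1 ≤ j) :
    sgen cs j * seg cs a b = seg cs a b * sgen cs j := by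
  induction b with
  | zero => rw [seg_of_le cs (by omega)]; simp
  | succ c ih =>
    rcases le_or_gt a c with hac | hac
    · rw [seg_succ_right cs hac, ← mul_assoc, ih (by omega), mul_assoc,
        ← sgen_comm cs (show c + 2 ≤ j by omega), ← mul_assoc]
    · rcases Nat.lt_or_ge (c + 1) (a + 1) with hc | hc
      · rw [seg_of_le cs (by omega)]; simp
      · have : a = c + 1 := by omega
        subst this
        rw [seg_of_le cs (le_refl _)]; simp

/-- Conjugation by the cycle `t_h` shifts a simple reflection: `t_h σ_j = σ_{j+1} t_h`. -/
lemma seg_shift {j h : ℕ} (hj : 1 ≤ j) (hjh : j + 2 ≤ h) (hn : h ≤ n) :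
    seg cs 1 h * sgen cs j = sgen cs (j + 1) * seg cs 1 h := by
  have d1 : seg cs 1 h = seg cs 1 j * (sgen cs j * (sgen cs (j + 1) * seg cs (j + 2) h)) := by
    rw [seg_split cs (show (1:ℕ) ≤ j by omega) (show j ≤ h by omega),
      seg_succ_left cs (show j < h by omega),
      seg_succ_left cs (show j + 1 < h by omega)]
  rw [d1]
  have c1 : seg cs (j + 2) h * sgen cs j = sgen cs j * seg cs (j + 2) h :=
    (sgen_comm_seg_left cs (le_refl _)).symm
  have braid := sgen_braid cs hj (show j + 1 < n by omega)
  have c2 : sgen cs (j + 1) * seg cs 1 j = seg cs 1 j * sgen cs (j + 1) :=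
    sgen_comm_seg_right cs (by omega)
  calc seg cs 1 j * (sgen cs j * (sgen cs (j + 1) * seg cs (j + 2) h)) * sgen cs j
      = seg cs 1 j * (sgen cs j * sgen cs (j + 1) * (seg cs (j + 2) h * sgen cs j)) := by
        simp only [mul_assoc]
    _ = seg cs 1 j * (sgen cs j * sgen cs (j + 1) * sgen cs j * seg cs (j + 2) h) := by
        rw [c1]; simp only [mul_assoc]
    _ = seg cs 1 j * (sgen cs (j + 1) * (sgen cs j * (sgen cs (j + 1) * seg cs (j + 2) h))) := by
        rw [braid]; simp only [mul_assoc]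
    _ = sgen cs (j + 1) * (seg cs 1 j * (sgen cs j * (sgen cs (j + 1) * seg cs (j + 2) h))) := by
        rw [← mul_assoc, ← c2, mul_assoc]

/-- `rr cs b` is the reflection flipping the sign of coordinate `b`:
`r_b = (s_{b-1}⋯s_1) s_0 (s_1⋯s_{b-1})`. -/
def rr (b : ℕ) : W := (seg cs 1 b)⁻¹ * sgen cs 0 * seg cs 1 b

lemma rr_one : rr cs 1 = sgen cs 0 := by
  rw [rr, seg_of_le cs (le_refl 1)]; simp

lemma rr_succ {b : ℕ} (hb : 1 ≤ b) : rr cs (b + 1) = sgen cs b * rr cs b * sgen cs b := by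
  rw [rr, rr, seg_succ_right cs hb, mul_inv_rev, sgen_inv]
  simp only [mul_assoc]

/-- Conjugation by `t_h` shifts the sign-flip reflections: `t_h r_b = r_{b+1} t_h`. -/
lemma seg_rr_shift : ∀ b, ∀ h, 1 ≤ b → b + 1 ≤ h → h ≤ n →
    seg cs 1 h * rr cs b = rr cs (b + 1) * seg cs 1 h := by
  intro b
  induction b with
  | zero => intro h h1 _ _; omega
  | succ c ih =>
    intro h _ hbh hn
    rcases Nat.eq_zero_or_pos c with rfl | hc
    · -- base case b = 1 : t_h σ₀ = σ₁ σ₀ σ₁ t_h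
      rw [rr_one, rr_succ cs (le_refl 1), rr_one]
      have d1 : seg cs 1 h = sgen cs 1 * seg cs 2 h := seg_succ_left cs (by omega)
      have c1 : sgen cs 0 * seg cs 2 h = seg cs 2 h * sgen cs 0 :=
        sgen_comm_seg_left cs (by omega)
      have s11 : sgen cs 1 * sgen cs 1 = 1 := sgen_mul_self cs 1
      calc seg cs 1 h * sgen cs 0
          = sgen cs 1 * (sgen cs 0 * seg cs 2 h) := by rw [d1, mul_assoc, ← c1]
        _ = sgen cs 1 * sgen cs 0 * (sgen cs 1 * sgen cs 1) * seg cs 2 h := by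
            rw [s11]; simp only [mul_assoc, one_mul, mul_one]
        _ = sgen cs 1 * sgen cs 0 * sgen cs 1 * (sgen cs 1 * seg cs 2 h) := by
            simp only [mul_assoc]
        _ = sgen cs 1 * sgen cs 0 * sgen cs 1 * seg cs 1 h := by rw [← d1]
    · -- inductive step
      have hshift : seg cs 1 h * sgen cs c = sgen cs (c + 1) * seg cs 1 h :=
        seg_shift cs hc (by omega) hn
      rw [rr_succ cs hc, rr_succ cs (by omega : 1 ≤ c + 1), rr_succ cs hc]
      calc seg cs 1 h * (sgen cs c * rr cs c * sgen cs c)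
          = (seg cs 1 h * sgen cs c) * rr cs c * sgen cs c := by simp only [mul_assoc]
        _ = sgen cs (c + 1) * (seg cs 1 h * rr cs c) * sgen cs c := by
            rw [hshift]; simp only [mul_assoc]
        _ = sgen cs (c + 1) * (rr cs (c + 1) * (seg cs 1 h * sgen cs c)) := by
            rw [ih h hc (by omega) hn]; simp only [mul_assoc]
        _ = sgen cs (c + 1) * (sgen cs c * rr cs c * sgen cs c) * (sgen cs (c + 1) * seg cs 1 h) := by
            rw [hshift, rr_succ cs hc]; simp only [mul_assoc]
        _ = sgen cs (c + 1) * (sgen cs c * rr cs c * sgen cs c) * sgen cs (c + 1) * seg cs 1 h := by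
            simp only [mul_assoc]

lemma rr_shift_pow {a h : ℕ} (ha : 1 ≤ a) (hn : h ≤ n) :
    ∀ j, a + j ≤ h → rr cs a * ((seg cs 1 h)⁻¹) ^ j = ((seg cs 1 h)⁻¹) ^ j * rr cs (a + j) := by
  intro j
  induction j generalizing a with
  | zero => intro _; simp
  | succ c ih =>
    intro hj
    have key : rr cs a * (seg cs 1 h)⁻¹ = (seg cs 1 h)⁻¹ * rr cs (a + 1) := by
      have h2 := seg_rr_shift cs a h ha (by omega) hn
      have h3 : (seg cs 1 h)⁻¹ * (seg cs 1 h * rr cs a) * (seg cs 1 h)⁻¹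
          = (seg cs 1 h)⁻¹ * (rr cs (a + 1) * seg cs 1 h) * (seg cs 1 h)⁻¹ := by rw [h2]
      simpa [mul_assoc] using h3
    rw [pow_succ', ← mul_assoc, key, mul_assoc, ih (by omega) (by omega),
      show a + 1 + c = a + (c + 1) by omega, mul_assoc]

/-- `rho cs j = r_j r_{j-1} ⋯ r_1`. -/
def rho : ℕ → W
  | 0 => 1
  | (j+1) => rr cs (j+1) * rho j

lemma rho_succ (j : ℕ) : rho cs (j + 1) = rr cs (j + 1) * rho cs j := rfl

lemma tau_eq_seg (k : ℕ) : tau cs k = seg cs 0 k := by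
  rw [tau, seg, Nat.sub_zero, List.range_eq_range']

lemma tgen_eq_seg (k : ℕ) : tgen cs k = seg cs 1 k := by
  rw [tgen, seg]
  congr 1
  have : List.range' 1 (k - 1) = (List.range (k - 1)).map (· + 1) := by
    induction (k - 1) with
    | zero => rfl
    | succ c ih =>
      rw [List.range_succ, show c + 1 = c + 1 by rfl]
      have h2 : List.range' 1 (c + 1) = List.range' 1 c ++ [1 + c] := by
        simpa using List.range'_concat (step := 1) (s := 1) (n := c)
      rw [h2, ih, List.map_append]
      simp [Nat.add_comm]
  rw [this, List.map_map]
  rfl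

lemma tau_zero : tau cs 0 = 1 := by rw [tau_eq_seg, seg_of_le cs (le_refl 0)]

lemma tau_head {b : ℕ} (hb : 1 ≤ b) : tau cs b = sgen cs 0 * seg cs 1 b := by
  rw [tau_eq_seg, seg_succ_left cs (by omega)]

/-- `τ_b^{-j} = t_b^{-j} · (r_j r_{j-1} ⋯ r_1)`. -/
lemma tau_inv_pow : ∀ j b, j ≤ b → b ≤ n →
    ((tau cs b)⁻¹) ^ j = ((seg cs 1 b)⁻¹) ^ j * rho cs j := by
  intro j
  induction j with
  | zero => intro b _ _; simp [rho]
  | succ c ih =>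
    intro b hjb hbn
    have hb1 : 1 ≤ b := by omega
    have htau : (tau cs b)⁻¹ = (seg cs 1 b)⁻¹ * rr cs 1 := by
      rw [tau_head cs hb1, mul_inv_rev, sgen_inv, rr_one]
    rw [pow_succ', ih b (by omega) hbn, htau, mul_assoc, ← mul_assoc (rr cs 1),
      rr_shift_pow cs (le_refl 1) hbn c (by omega),
      show (1:ℕ) + c = c + 1 by omega, rho_succ, pow_succ']
    simp only [mul_assoc]

/-- shifting a descending run across the cycle `t_h`. -/
lemma desc_shift : ∀ b a h, 2 ≤ a → b + 1 ≤ h → h ≤ n →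
    (seg cs a b)⁻¹ * seg cs 1 h = seg cs 1 h * (seg cs (a - 1) (b - 1))⁻¹ := by
  intro b
  induction b with
  | zero =>
    intro a h ha _ _
    rw [seg_of_le cs (a := a) (b := 0) (by omega), seg_of_le cs (a := a - 1) (b := 0 - 1) (by omega)]
    simp
  | succ c ih =>
    intro a h ha hch hn
    rcases Nat.lt_or_ge c a with hca | hca
    · rw [seg_of_le cs (a := a) (b := c + 1) (by omega),
        seg_of_le cs (a := a - 1) (b := c + 1 - 1) (by omega)]
      simp
    · have hc2 : 2 ≤ c := by omega
      have d1 : seg cs a (c + 1) = seg cs a c * sgen cs c := seg_succ_right cs hca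
      have hshift : seg cs 1 h * sgen cs (c - 1) = sgen cs c * seg cs 1 h := by
        have := seg_shift cs (j := c - 1) (by omega) (by omega) hn
        rwa [show c - 1 + 1 = c by omega] at this
      have d2 : seg cs (a - 1) c = seg cs (a - 1) (c - 1) * sgen cs (c - 1) := by
        have := seg_succ_right cs (a := a - 1) (b := c - 1) (by omega)
        rwa [show c - 1 + 1 = c by omega] at this
      rw [d1, mul_inv_rev, sgen_inv, mul_assoc, ih a h ha (by omega) hn,
        show c + 1 - 1 = c by omega, d2, mul_inv_rev, sgen_inv]
      calc sgen cs c * (seg cs 1 h * (seg cs (a - 1) (c - 1))⁻¹)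
          = (sgen cs c * seg cs 1 h) * (seg cs (a - 1) (c - 1))⁻¹ := by rw [mul_assoc]
        _ = seg cs 1 h * (sgen cs (c - 1) * (seg cs (a - 1) (c - 1))⁻¹) := by
            rw [← hshift, mul_assoc]

/-- `σ_b t_b σ_b = t_b σ_b σ_{b-1}` for `b ≥ 2`. -/
lemma zpp {b : ℕ} (hb : 2 ≤ b) (hn : b + 1 ≤ n) :
    sgen cs b * seg cs 1 b * sgen cs b = seg cs 1 b * sgen cs b * sgen cs (b - 1) := by
  have d1 : seg cs 1 b = seg cs 1 (b - 1) * sgen cs (b - 1) := by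
    have := seg_succ_right cs (a := 1) (b := b - 1) (by omega)
    rwa [show b - 1 + 1 = b by omega] at this
  have c1 : sgen cs b * seg cs 1 (b - 1) = seg cs 1 (b - 1) * sgen cs b :=
    sgen_comm_seg_right cs (by omega)
  have braid : sgen cs (b - 1) * sgen cs b * sgen cs (b - 1)
      = sgen cs b * sgen cs (b - 1) * sgen cs b := by
    have := sgen_braid cs (i := b - 1) (by omega) (by omega)
    rw [show b - 1 + 1 = b by omega] at this
    exact this
  calc sgen cs b * seg cs 1 b * sgen cs b
      = (sgen cs b * seg cs 1 (b - 1)) * (sgen cs (b - 1) * sgen cs b) := by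
        rw [d1]; simp only [mul_assoc]
    _ = seg cs 1 (b - 1) * (sgen cs b * sgen cs (b - 1) * sgen cs b) := by
        rw [c1]; simp only [mul_assoc]
    _ = seg cs 1 (b - 1) * (sgen cs (b - 1) * sgen cs b * sgen cs (b - 1)) := by rw [← braid]
    _ = seg cs 1 b * sgen cs b * sgen cs (b - 1) := by
        rw [d1]; simp only [mul_assoc]

/-- powers of the cycle: `t_{b+1}^j = t_b^j · (σ_b σ_{b-1} ⋯ σ_{b-j+1})`. -/
lemma cycle_pow : ∀ j b, j ≤ b → b + 1 ≤ n →
    (seg cs 1 (b + 1)) ^ j = (seg cs 1 b) ^ j * (seg cs (b - j + 1) (b + 1))⁻¹ := by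
  intro j
  induction j with
  | zero =>
    intro b _ _
    rw [seg_of_le cs (a := b - 0 + 1) (b := b + 1) (by omega)]; simp
  | succ c ih =>
    intro b hjb hn
    have hb1 : 1 ≤ b := by omega
    have d0 : seg cs 1 (b + 1) = seg cs 1 b * sgen cs b := seg_succ_right cs (by omega)
    rcases Nat.eq_zero_or_pos c with rfl | hc
    · -- j = 1
      have d2 : seg cs (b - 1 + 1) (b + 1) = sgen cs b := by
        rw [show b - 1 + 1 = b by omega, seg_succ_left cs (a := b) (by omega),
          seg_of_le cs (a := b + 1) (b := b + 1) (le_refl _), mul_one]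
      rw [pow_one, pow_one, d2, sgen_inv, d0]
    · -- step c → c + 1, with 1 ≤ c, c + 1 ≤ b
      set a := b - c + 1 with ha_def
      have ha2 : 2 ≤ a := by omega
      have hab : a ≤ b := by omega
      have key : (seg cs a (b + 1))⁻¹ * seg cs 1 (b + 1) = seg cs 1 b * (seg cs (a - 1) (b + 1))⁻¹ := by
        have d1 : seg cs a (b + 1) = seg cs a b * sgen cs b := seg_succ_right cs hab
        have sseg : (seg cs a b)⁻¹ * seg cs 1 (b + 1)
            = seg cs 1 (b + 1) * (seg cs (a - 1) (b - 1))⁻¹ :=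
          desc_shift cs b a (b + 1) ha2 (le_refl _) hn
        have z := zpp cs (b := b) (by omega) hn
        have hseg2 : seg cs (b - 1) (b + 1) = sgen cs (b - 1) * sgen cs b := by
          rw [seg_succ_left cs (a := b - 1) (b := b + 1) (by omega), show b - 1 + 1 = b by omega,
            seg_succ_left cs (a := b) (b := b + 1) (by omega),
            seg_of_le cs (a := b + 1) (b := b + 1) (le_refl _), mul_one]
        have d3 : seg cs (a - 1) (b + 1) = seg cs (a - 1) (b - 1) * (sgen cs (b - 1) * sgen cs b) := by
          rw [seg_split cs (a := a - 1) (b := b - 1) (c := b + 1) (by omega) (by omega), hseg2]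
        calc (seg cs a (b + 1))⁻¹ * seg cs 1 (b + 1)
            = sgen cs b * ((seg cs a b)⁻¹ * seg cs 1 (b + 1)) := by
              rw [d1, mul_inv_rev, sgen_inv, mul_assoc]
          _ = sgen cs b * seg cs 1 b * sgen cs b * (seg cs (a - 1) (b - 1))⁻¹ := by
              rw [sseg, d0]; simp only [mul_assoc]
          _ = seg cs 1 b * (sgen cs b * (sgen cs (b - 1) * (seg cs (a - 1) (b - 1))⁻¹)) := by
              rw [z]; simp only [mul_assoc]
          _ = seg cs 1 b * (seg cs (a - 1) (b + 1))⁻¹ := by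
              rw [d3, mul_inv_rev, mul_inv_rev, sgen_inv, sgen_inv]
              simp only [mul_assoc]
      have harw : b - (c + 1) + 1 = a - 1 := by omega
      calc (seg cs 1 (b + 1)) ^ (c + 1)
          = (seg cs 1 (b + 1)) ^ c * seg cs 1 (b + 1) := pow_succ _ _
        _ = (seg cs 1 b) ^ c * ((seg cs a (b + 1))⁻¹ * seg cs 1 (b + 1)) := by
            rw [ih b (by omega) hn, mul_assoc]
        _ = (seg cs 1 b) ^ c * (seg cs 1 b * (seg cs (a - 1) (b + 1))⁻¹) := by rw [key]
        _ = (seg cs 1 b) ^ (c + 1) * (seg cs (b - (c + 1) + 1) (b + 1))⁻¹ := by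
            rw [pow_succ, harw, mul_assoc]

/-- the cycle `t_b` has order dividing `b`. -/
lemma seg_pow_self : ∀ b, b ≤ n → (seg cs 1 b) ^ b = 1 := by
  intro b
  induction b with
  | zero => intro _; simp
  | succ c ih =>
    intro hn
    rcases Nat.eq_zero_or_pos c with rfl | hc
    · rw [seg_of_le cs (le_refl 1)]; simp
    · have key := cycle_pow cs c c (le_refl c) hn
      rw [show c - c + 1 = 1 by omega] at key
      rw [pow_succ, key, ih (by omega), one_mul, inv_mul_cancel]

/-- `(r_b ⋯ r_1) σ_0 t_h = t_h (r_{b-1} ⋯ r_1)`. -/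
lemma rho_shift : ∀ b h, 1 ≤ b → b ≤ h → h ≤ n →
    rho cs b * sgen cs 0 * seg cs 1 h = seg cs 1 h * rho cs (b - 1) := by
  intro b
  induction b with
  | zero => intro h h1 _ _; omega
  | succ c ih =>
    intro h _ hbh hn
    rcases Nat.eq_zero_or_pos c with rfl | hc
    · rw [rho_succ, rr_one]
      show sgen cs 0 * 1 * sgen cs 0 * seg cs 1 h = seg cs 1 h * 1
      rw [mul_one, mul_one, sgen_mul_self, one_mul]
    · rw [rho_succ, show c + 1 - 1 = c by omega]
      calc rr cs (c + 1) * rho cs c * sgen cs 0 * seg cs 1 h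
          = rr cs (c + 1) * (rho cs c * sgen cs 0 * seg cs 1 h) := by simp only [mul_assoc]
        _ = rr cs (c + 1) * (seg cs 1 h * rho cs (c - 1)) := by rw [ih h hc (by omega) hn]
        _ = (rr cs (c + 1) * seg cs 1 h) * rho cs (c - 1) := by rw [mul_assoc]
        _ = (seg cs 1 h * rr cs c) * rho cs (c - 1) := by
            rw [← seg_rr_shift cs c h hc (by omega) hn]
        _ = seg cs 1 h * (rr cs c * rho cs (c - 1)) := by rw [mul_assoc]
        _ = seg cs 1 h * rho cs c := by
            congr 1
            have : c - 1 + 1 = c := by omega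
            conv_rhs => rw [← this, rho_succ, this]

/-- `τ_b^{-b} = r_b ⋯ r_1`. -/
lemma tau_inv_pow_self {b : ℕ} (hb : b ≤ n) : ((tau cs b)⁻¹) ^ b = rho cs b := by
  rw [tau_inv_pow cs b b (le_refl b) hb, inv_pow, seg_pow_self cs b hb, inv_one, one_mul]

/-- the key exchange identity: `τ_b^{-b} τ_h = t_h τ_{b-1}^{-(b-1)}`. -/
lemma star2 {b h : ℕ} (hb : 1 ≤ b) (hh : b ≤ h) (hn : h ≤ n) :
    ((tau cs b)⁻¹) ^ b * tau cs h = seg cs 1 h * ((tau cs (b - 1))⁻¹) ^ (b - 1) := by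
  rw [tau_inv_pow_self cs (by omega), tau_inv_pow_self cs (by omega),
    tau_head cs (by omega), ← mul_assoc]
  exact rho_shift cs b h hb hh hn

/-- iterated exchange: `τ_E^{-E} τ_h^e = t_h^e τ_{E-e}^{-(E-e)}`. -/
lemma star : ∀ e E h, e ≤ E → E ≤ h → h ≤ n →
    ((tau cs E)⁻¹) ^ E * (tau cs h) ^ e = (seg cs 1 h) ^ e * ((tau cs (E - e))⁻¹) ^ (E - e) := by
  intro e
  induction e with
  | zero => intro E h _ _ _; simp
  | succ c ih =>
    intro E h he hE hn
    have h1 : 1 ≤ E - c := by omega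
    have h2 : E - c ≤ h := by omega
    calc ((tau cs E)⁻¹) ^ E * (tau cs h) ^ (c + 1)
        = (((tau cs E)⁻¹) ^ E * (tau cs h) ^ c) * tau cs h := by rw [pow_succ, mul_assoc]
      _ = (seg cs 1 h) ^ c * (((tau cs (E - c))⁻¹) ^ (E - c) * tau cs h) := by
          rw [ih E h (by omega) hE hn, mul_assoc]
      _ = (seg cs 1 h) ^ c * (seg cs 1 h * ((tau cs (E - c - 1))⁻¹) ^ (E - c - 1)) := by
          rw [star2 cs h1 h2 hn]
      _ = (seg cs 1 h) ^ (c + 1) * ((tau cs (E - (c + 1)))⁻¹) ^ (E - (c + 1)) := by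
          rw [pow_succ, show E - c - 1 = E - (c + 1) by omega, mul_assoc]

/-- the chain lemma: `∏ t_{h_j}^{e_j} = τ_E^{-E} ∏ τ_{h_j}^{e_j}` where `E = Σ e_j`. -/
lemma chain : ∀ L : List (ℕ × ℕ), (∀ p ∈ L, p.1 ≤ n) →
    (∀ p ∈ L, (L.map Prod.snd).sum ≤ p.1) →
    ((tau cs ((L.map Prod.snd).sum))⁻¹) ^ ((L.map Prod.snd).sum)
      * (L.map (fun p => (tau cs p.1) ^ p.2)).prod
    = (L.map (fun p => (tgen cs p.1) ^ p.2)).prod := by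
  intro L
  induction L with
  | nil => simp [tau_zero]
  | cons p L' ih =>
    intro hn hsum
    have hpn : p.1 ≤ n := hn p List.mem_cons_self
    have hEp : p.2 + (L'.map Prod.snd).sum ≤ p.1 := by
      have := hsum p List.mem_cons_self
      simpa using this
    simp only [List.map_cons, List.prod_cons, List.sum_cons]
    have key := star cs p.2 (p.2 + (L'.map Prod.snd).sum) p.1 (by omega) hEp hpn
    rw [show p.2 + (L'.map Prod.snd).sum - p.2 = (L'.map Prod.snd).sum by omega] at key
    rw [← mul_assoc, key, mul_assoc, ih (fun q hq => hn q (List.mem_cons_of_mem _ hq))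
      (fun q hq => by
        have h1 : p.2 + (L'.map Prod.snd).sum ≤ q.1 := by
          simpa using hsum q (List.mem_cons_of_mem _ hq)
        omega),
      tgen_eq_seg]
lemma listprod_succ {l : ℕ} (f : Fin (l + 1) → W) :
    ((List.finRange (l + 1)).map f).prod
      = f 0 * ((List.finRange l).map (fun j => f j.succ)).prod := by
  rw [List.finRange_succ, List.map_cons, List.prod_cons, List.map_map]
  rfl

lemma sum_univ_eq_list {l : ℕ} (e : Fin l → ℕ) : ∑ j, e j = ((List.finRange l).map e).sum := rfl

lemma chain_fin (l : ℕ) (h e : Fin l → ℕ) (hn : ∀ j, h j ≤ n) (hs : ∀ j, (∑ j', e j') ≤ h j) :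
    ((List.finRange l).map (fun j => tgen cs (h j) ^ (e j))).prod
    = ((tau cs (∑ j, e j))⁻¹) ^ (∑ j, e j)
      * ((List.finRange l).map (fun j => tau cs (h j) ^ (e j))).prod := by
  set L := (List.finRange l).map (fun j => (h j, e j)) with hL
  have hsum : (L.map Prod.snd).sum = ∑ j, e j := by
    rw [hL, List.map_map, sum_univ_eq_list]
    rfl
  have h1 : ∀ p ∈ L, p.1 ≤ n := by
    intro p hp
    rw [hL, List.mem_map] at hp
    obtain ⟨j, _, rfl⟩ := hp
    exact hn j
  have h2 : ∀ p ∈ L, (L.map Prod.snd).sum ≤ p.1 := by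
    intro p hp
    rw [hsum]
    rw [hL, List.mem_map] at hp
    obtain ⟨j, _, rfl⟩ := hp
    exact hs j
  have key := chain cs L h1 h2
  rw [hsum] at key
  rw [hL, List.map_map, List.map_map] at key
  exact key.symm

lemma sgen_mem_Sdot (j : ℕ) : sgen cs (j + 1) ∈ Sdot cs := by
  unfold sgen; split
  · exact Subgroup.subset_closure ⟨⟨j + 1, ‹_›⟩, by simp, rfl⟩
  · exact Subgroup.one_mem _

lemma tgen_mem_Sdot (k : ℕ) : tgen cs k ∈ Sdot cs := by
  rw [tgen]
  apply Subgroup.list_prod_mem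
  intro x hx
  rw [List.mem_map] at hx
  obtain ⟨j, _, rfl⟩ := hx
  exact sgen_mem_Sdot cs j

lemma zpow_neg_natCast (x : W) (a : ℕ) : x ^ (-(a : ℤ)) = (x⁻¹) ^ a := by
  rw [zpow_neg, zpow_natCast, inv_pow]

lemma zpow_sub_natCast (x : W) (a b : ℕ) : x ^ ((a : ℤ) - (b : ℤ)) = (x⁻¹) ^ b * x ^ a := by
  rw [sub_eq_add_neg, add_comm, zpow_add, zpow_neg, zpow_natCast, zpow_natCast, inv_pow]

end Lemmas


/-- `w` is a standard OGS elementary element of `Ṡ_n`: `w ∈ Ṡ_n` and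
`w = t_{h_1}^{e_1} ⋯ t_{h_l}^{e_l}` for some `2 ≤ h_1 < ⋯ < h_l ≤ n` and
`1 ≤ e_j ≤ h_j - 1` with `Σ_{j=1}^l e_j ≤ h_1`. -/
def IsElementary (cs : CoxeterSystem (BCoxeterMatrix n) W) (w : W) : Prop :=
  w ∈ Sdot cs ∧
  ∃ (l : ℕ) (hl : 0 < l) (h : Fin l → ℕ) (e : Fin l → ℕ),
    StrictMono h ∧ (∀ j, 2 ≤ h j) ∧ (∀ j, h j ≤ n) ∧
    (∀ j, 1 ≤ e j ∧ e j ≤ h j - 1) ∧ (∑ j, e j ≤ h ⟨0, hl⟩) ∧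
    w = ((List.finRange l).map (fun j => tgen cs (h j) ^ (e j))).prod

/-- A non-identity `w ∈ W` is a standard OGS elementary element of `Ṡ_n` iff
`w = τ_{k_1}^{i_1} ⋯ τ_{k_m}^{i_m}` with `1 ≤ k_1 < ⋯ < k_m ≤ n`,
`-k_1 ≤ i_1 < 0`, `0 < i_j < k_j` for `j ≥ 2`, and `Σ_{j=1}^m i_j = 0`. -/
theorem isElementary_iff (cs : CoxeterSystem (BCoxeterMatrix n) W) (w : W) (hw : w ≠ 1) :
    IsElementary cs w ↔
      ∃ (m : ℕ) (hm : 0 < m) (k : Fin m → ℕ) (i : Fin m → ℤ),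
        StrictMono k ∧ (∀ j, 1 ≤ k j) ∧ (∀ j, k j ≤ n) ∧
        (-(k ⟨0, hm⟩ : ℤ) ≤ i ⟨0, hm⟩ ∧ i ⟨0, hm⟩ < 0) ∧
        (∀ j : Fin m, 0 < (j : ℕ) → 0 < i j ∧ i j < (k j : ℤ)) ∧
        (∑ j, i j = 0) ∧
        w = ((List.finRange m).map (fun j => tau cs (k j) ^ i j)).prod := by
  constructor
  · rintro ⟨hmem, l, hl, h, e, hmono, hh2, hhn, hee, hsum, hprod⟩
    have hzero : ∀ j : Fin l, (⟨0, hl⟩ : Fin l) ≤ j := fun j => by simp [Fin.le_def]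
    have hE1 : 1 ≤ ∑ j, e j :=
      le_trans (hee ⟨0, hl⟩).1
        (Finset.single_le_sum (fun j _ => Nat.zero_le _) (Finset.mem_univ _))
    have hEh : ∀ j, (∑ j', e j') ≤ h j := fun j => le_trans hsum (hmono.monotone (hzero j))
    have hw2 : w = ((tau cs (∑ j, e j))⁻¹) ^ (∑ j, e j)
        * ((List.finRange l).map (fun j => tau cs (h j) ^ (e j))).prod := by
      rw [hprod, chain_fin cs l h e hhn hEh]
    rcases lt_or_eq_of_le hsum with hlt | heq
    · -- E < h 0 : take m = l + 1
      refine ⟨l + 1, Nat.succ_pos l, Fin.cases (∑ j, e j) h,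
        Fin.cases (-(∑ j, e j : ℕ) : ℤ) (fun j => (e j : ℤ)), ?_, ?_, ?_, ?_, ?_, ?_, ?_⟩
      · intro a b hab
        rcases Fin.eq_zero_or_eq_succ a with rfl | ⟨a', rfl⟩ <;>
          rcases Fin.eq_zero_or_eq_succ b with rfl | ⟨b', rfl⟩
        · exact absurd hab (lt_irrefl _)
        · simp only [Fin.cases_zero, Fin.cases_succ]
          exact lt_of_lt_of_le hlt (hmono.monotone (hzero b'))
        · exact absurd hab (Fin.not_lt_zero _)
        · simp only [Fin.cases_succ]
          exact hmono (Fin.succ_lt_succ_iff.mp hab)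
      · intro j
        rcases Fin.eq_zero_or_eq_succ j with rfl | ⟨j', rfl⟩
        · simpa using hE1
        · simp only [Fin.cases_succ]
          exact le_trans (by omega) (hh2 j')
      · intro j
        rcases Fin.eq_zero_or_eq_succ j with rfl | ⟨j', rfl⟩
        · simp only [Fin.cases_zero]
          exact le_trans (le_of_lt hlt) (hhn _)
        · simp only [Fin.cases_succ]; exact hhn j'
      · simp only [Fin.mk_zero, Fin.cases_zero]
        exact ⟨le_refl _, by omega⟩
      · intro j hj
        rcases Fin.eq_zero_or_eq_succ j with rfl | ⟨j', rfl⟩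
        · simp at hj
        · simp only [Fin.cases_succ]
          have h1 := (hee j').1
          have h2 := (hee j').2
          have h3 := hh2 j'
          constructor <;> [exact_mod_cast h1; omega]
      · rw [Fin.sum_univ_succ]
        simp only [Fin.cases_zero, Fin.cases_succ]
        have hs3 : ∑ j, ((e j : ℤ)) = ((∑ j, e j : ℕ) : ℤ) := by push_cast; rfl
        rw [hs3]; ring
      · rw [hw2, listprod_succ]
        simp only [Fin.cases_zero, Fin.cases_succ]
        rw [zpow_neg_natCast]
        simp only [zpow_natCast]
    · -- E = h 0 : take m = l
      rcases Nat.exists_eq_succ_of_ne_zero (Nat.pos_iff_ne_zero.mp hl) with ⟨l', rfl⟩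
      simp only [Fin.mk_zero] at heq hsum
      refine ⟨l' + 1, hl, h, fun j => (e j : ℤ) - (if j = 0 then (h j : ℤ) else 0),
        hmono, fun j => le_trans (by omega) (hh2 j), hhn, ?_, ?_, ?_, ?_⟩
      · have he1 := (hee 0).1
        have he2 := (hee 0).2
        have hg2 := hh2 0
        have hlt0 : e 0 < h 0 := by omega
        simp only [Fin.mk_zero, eq_self_iff_true, if_true, ite_true, if_pos]
        constructor
        · omega
        · omega
      · intro j hj
        have hj0 : j ≠ 0 := by
          intro hj0; rw [hj0] at hj; simp at hj
        simp only [if_neg hj0, sub_zero]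
        have he1 := (hee j).1
        have he2 := (hee j).2
        constructor
        · omega
        · have hg2 := hh2 j
          have : e j < h j := by omega
          omega
      · have hs1 : ∑ j, ((e j : ℤ) - (if j = 0 then (h j : ℤ) else 0))
            = (∑ j, (e j : ℤ)) - ∑ j, (if j = 0 then (h j : ℤ) else 0) :=
          Finset.sum_sub_distrib _ _
        have hs2 : ∑ j, (if j = 0 then (h j : ℤ) else 0) = (h 0 : ℤ) := by
          rw [Finset.sum_ite_eq' Finset.univ 0 (fun j => (h j : ℤ))]
          simp
        have hs3 : ∑ j, ((e j : ℤ)) = ((∑ j, e j : ℕ) : ℤ) := by push_cast; rfl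
        rw [hs1, hs2, hs3, heq, sub_self]
      · rw [hw2, heq, listprod_succ, listprod_succ]
        simp only [Fin.succ_ne_zero, ite_true, ite_false, if_true, if_false, eq_self_iff_true,
          sub_zero, zpow_natCast, zpow_sub_natCast, mul_assoc]
  · rintro ⟨m, hm, k, i, hkmono, hk1, hkn, ⟨hi0l, hi0n⟩, hipos, hisum, hprod⟩
    rcases Nat.exists_eq_succ_of_ne_zero (Nat.pos_iff_ne_zero.mp hm) with ⟨m', rfl⟩
    simp only [Fin.mk_zero] at hi0l hi0n
    have hk0 : 1 ≤ k 0 := hk1 0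
    have hksucc : ∀ j : Fin m', k 0 < k j.succ := fun j => hkmono (Fin.succ_pos j)
    have hipos' : ∀ j : Fin m', 0 < i j.succ ∧ i j.succ < k j.succ := fun j =>
      hipos j.succ (by simp [Fin.val_succ])
    have hsum' : i 0 + ∑ j : Fin m', i j.succ = 0 := by
      rw [← Fin.sum_univ_succ]; exact hisum
    by_cases hc : i 0 = -(k 0 : ℤ)
    · -- i₁ = -k₁ : drop the head
      rcases Nat.eq_zero_or_pos m' with rfl | hm'
      · exfalso
        simp only [Finset.univ_eq_empty, Finset.sum_empty, add_zero] at hsum'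
        omega
      have hEeq : ∑ j : Fin m', (i j.succ).toNat = k 0 := by
        have h2 : ∑ j : Fin m', ((i j.succ).toNat : ℤ) = ∑ j : Fin m', i j.succ :=
          Finset.sum_congr rfl (fun j _ => Int.toNat_of_nonneg (le_of_lt (hipos' j).1))
        have h3 : ((∑ j : Fin m', (i j.succ).toNat : ℕ) : ℤ) = (k 0 : ℤ) := by
          push_cast
          rw [h2]
          omega
        exact_mod_cast h3
      have htail : ∀ j : Fin m', tau cs (k j.succ) ^ (i j.succ)
          = tau cs (k j.succ) ^ ((i j.succ).toNat) := fun j => by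
        rw [← zpow_natCast, Int.toNat_of_nonneg (le_of_lt (hipos' j).1)]
      have hprod2 : w
          = ((List.finRange m').map (fun j => tgen cs (k j.succ) ^ ((i j.succ).toNat))).prod := by
        rw [chain_fin cs m' _ _ (fun j => hkn j.succ)
          (fun j => by rw [hEeq]; exact le_of_lt (hksucc j)), hEeq, hprod, listprod_succ]
        congr 1
        · rw [hc, zpow_neg_natCast]
        · simp only [htail]
      refine ⟨?_, m', hm', fun j => k j.succ, fun j => (i j.succ).toNat, ?_, ?_, ?_, ?_, ?_, hprod2⟩
      · rw [hprod2]
        apply Subgroup.list_prod_mem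
        intro x hx
        rw [List.mem_map] at hx
        obtain ⟨j, _, rfl⟩ := hx
        exact Subgroup.pow_mem _ (tgen_mem_Sdot cs _) _
      · intro a b hab
        exact hkmono (Fin.succ_lt_succ_iff.mpr hab)
      · intro j
        beta_reduce
        have := hksucc j
        omega
      · intro j
        exact hkn j.succ
      · intro j
        beta_reduce
        have h1 := (hipos' j).1
        have h2 := (hipos' j).2
        constructor <;> omega
      · beta_reduce
        rw [show (∑ j : Fin m', (fun j : Fin m' => (i j.succ).toNat) j) = ∑ j : Fin m', (i j.succ).toNat from rfl, hEeq]
        exact le_of_lt (hksucc _)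
    · -- -k₁ < i₁ < 0 : keep all indices
      have hgt : -(k 0 : ℤ) < i 0 := lt_of_le_of_ne hi0l (Ne.symm hc)
      set e : Fin (m' + 1) → ℕ := fun j => ((if j = 0 then (k j : ℤ) else 0) + i j).toNat with hedef
      have hnn : ∀ j : Fin (m' + 1), 0 ≤ (if j = 0 then (k j : ℤ) else 0) + i j := by
        intro j
        by_cases hj : j = 0
        · subst hj; rw [if_pos rfl]; omega
        · rw [if_neg hj, zero_add]
          rcases Fin.eq_zero_or_eq_succ j with rfl | ⟨j', rfl⟩
          · exact absurd rfl hj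
          · exact le_of_lt (hipos' j').1
      have hcast : ∀ j, ((e j : ℤ)) = (if j = 0 then (k j : ℤ) else 0) + i j := fun j =>
        Int.toNat_of_nonneg (hnn j)
      have hcast0 : ((e 0 : ℤ)) = (k 0 : ℤ) + i 0 := by rw [hcast 0, if_pos rfl]
      have hcasts : ∀ j : Fin m', ((e j.succ : ℤ)) = i j.succ := fun j => by
        rw [hcast j.succ, if_neg (Fin.succ_ne_zero j), zero_add]
      have hEeq : ∑ j, e j = k 0 := by
        have h3 : ((∑ j, e j : ℕ) : ℤ) = (k 0 : ℤ) := by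
          push_cast
          have h4 : ∑ j, ((e j : ℤ)) = ∑ j, ((if j = 0 then (k j : ℤ) else 0) + i j) :=
            Finset.sum_congr rfl (fun j _ => hcast j)
          rw [h4, Finset.sum_add_distrib, hisum, add_zero,
            Finset.sum_ite_eq' Finset.univ 0 (fun j => (k j : ℤ))]
          simp
        exact_mod_cast h3
      have hk02 : 2 ≤ k 0 := by omega
      have hprod2 : w = ((List.finRange (m' + 1)).map (fun j => tgen cs (k j) ^ (e j))).prod := by
        rw [chain_fin cs (m' + 1) k e hkn
          (fun j => by rw [hEeq]; exact hkmono.monotone (Fin.zero_le j)), hEeq, hprod,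
          listprod_succ (fun j => tau cs (k j) ^ i j),
          listprod_succ (fun j => tau cs (k j) ^ (e j)), ← mul_assoc, ← zpow_sub_natCast]
        congr 1
        · congr 1
          omega
        · exact congrArg List.prod
            (List.map_congr_left (fun j _ => by rw [← zpow_natCast, hcasts j]))
      refine ⟨?_, m' + 1, hm, k, e, hkmono, ?_, hkn, ?_, ?_, hprod2⟩
      · rw [hprod2]
        apply Subgroup.list_prod_mem
        intro x hx
        rw [List.mem_map] at hx
        obtain ⟨j, _, rfl⟩ := hx
        exact Subgroup.pow_mem _ (tgen_mem_Sdot cs _) _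
      · intro j
        rcases Fin.eq_zero_or_eq_succ j with rfl | ⟨j', rfl⟩
        · exact hk02
        · have := hksucc j'
          omega
      · intro j
        rcases Fin.eq_zero_or_eq_succ j with rfl | ⟨j', rfl⟩
        · have := hcast0
          constructor <;> omega
        · have h1 := (hipos' j').1
          have h2 := (hipos' j').2
          have h3 := hcasts j'
          constructor <;> omega
      · rw [Fin.mk_zero, hEeq]
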